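/- arXiv:1302.3647 — 3 statements merged into one kernel-verified Lean document; each statement's English description precedes it below -/
import Mathlib

section
/- For every u ∈ (1, 2], the polynomial p*(x) = 10x³ − 10(1+u)x² + 2((1+u)² + 2u)x − u(1+u) has positive discriminant, hence three distinct real roots. -/
/-!
The discriminant is `20 q(u)` with `q` a sum of squares that does not vanish at `u = 0`, hence
positive for every real `u`. For the roots, `p*` takes the values `-u(1+u)`, `(2u-1)/4`,
`-(1+u)(u-1)²/4` and `u(2u-1)(u-1)` at `0 < 1/2 < (1+u)/2 < u`, an alternating sign pattern as
soon as `u > 1`; the intermediate value theorem gives one root in each of the three gaps.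
-/

theorem exists_three_zeros_of_alternating_signs {f : ℝ → ℝ} (hf : Continuous f) {a b c d : ℝ}
    (hab : a ≤ b) (hbc : b ≤ c) (hcd : c ≤ d)
    (ha : f a < 0) (hb : 0 < f b) (hc : f c < 0) (hd : 0 < f d) :
    ∃ x₁ x₂ x₃, x₁ < x₂ ∧ x₂ < x₃ ∧ f x₁ = 0 ∧ f x₂ = 0 ∧ f x₃ = 0 := by
  obtain ⟨x₁, hx₁, hfx₁⟩ := intermediate_value_Ioo hab hf.continuousOn ⟨ha, hb⟩
  obtain ⟨x₂, hx₂, hfx₂⟩ := intermediate_value_Ioo' hbc hf.continuousOn ⟨hc, hb⟩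
  obtain ⟨x₃, hx₃, hfx₃⟩ := intermediate_value_Ioo hcd hf.continuousOn ⟨hc, hd⟩
  exact ⟨x₁, x₂, x₃, hx₁.2.trans hx₂.1, hx₂.2.trans hx₃.1, hfx₁, hfx₂, hfx₃⟩

theorem disc_sextic_pos (u : ℝ) :
    0 < 4 * u ^ 6 - 12 * u ^ 5 + 29 * u ^ 4 - 38 * u ^ 3 + 29 * u ^ 2 - 12 * u + 4 := by
  have sos : 4 * u ^ 6 - 12 * u ^ 5 + 29 * u ^ 4 - 38 * u ^ 3 + 29 * u ^ 2 - 12 * u + 4 =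
      4 * (u ^ 3 - 3 / 2 * u ^ 2 + 3 / 2 * u - 1) ^ 2 + 8 * (u * (u - 3 / 4)) ^ 2
        + 7 / 2 * u ^ 2 := by
    ring
  rw [sos]
  rcases eq_or_ne u 0 with rfl | _
  · norm_num
  · positivity

section pStar

variable (u : ℝ)

def pStar (x : ℝ) : ℝ :=
  10 * x ^ 3 - 10 * (1 + u) * x ^ 2 + 2 * ((1 + u) ^ 2 + 2 * u) * x - u * (1 + u)

theorem continuous_pStar : Continuous (pStar u) := by
  unfold pStar
  fun_prop

theorem pStar_zero : pStar u 0 = -(u * (1 + u)) := by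
  unfold pStar; ring

theorem pStar_half : pStar u (1 / 2) = (2 * u - 1) / 4 := by
  unfold pStar; ring

theorem pStar_mid : pStar u ((1 + u) / 2) = -((1 + u) * (u - 1) ^ 2 / 4) := by
  unfold pStar; ring

theorem pStar_self : pStar u u = u * (2 * u - 1) * (u - 1) := by
  unfold pStar; ring

variable {u}

theorem exists_three_roots_pStar (hu : 1 < u) :
    ∃ x₁ x₂ x₃, x₁ < x₂ ∧ x₂ < x₃ ∧ pStar u x₁ = 0 ∧ pStar u x₂ = 0 ∧ pStar u x₃ = 0 := by
  have hu0 : 0 < u := by linarith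
  apply exists_three_zeros_of_alternating_signs (continuous_pStar u)
    (by norm_num : (0 : ℝ) ≤ 1 / 2) (by linarith : (1 : ℝ) / 2 ≤ (1 + u) / 2)
    (by linarith : (1 + u) / 2 ≤ u)
  · rw [pStar_zero]; nlinarith
  · rw [pStar_half]; linarith
  · rw [pStar_mid]
    have : 0 < (u - 1) ^ 2 := by nlinarith
    have : 0 < (1 + u) * (u - 1) ^ 2 := by positivity
    linarith
  · rw [pStar_self]
    have : 0 < 2 * u - 1 := by linarith
    have : 0 < u - 1 := by linarith
    positivity

end pStar

theorem stmt_11_general (u : ℝ) (hu1 : 1 < u) :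
    (18 * 10 * (-(10 * (1 + u))) * (2 * ((1 + u) ^ 2 + 2 * u)) * (-(u * (1 + u)))
      - 4 * (-(10 * (1 + u))) ^ 3 * (-(u * (1 + u)))
      + (-(10 * (1 + u))) ^ 2 * (2 * ((1 + u) ^ 2 + 2 * u)) ^ 2
      - 4 * 10 * (2 * ((1 + u) ^ 2 + 2 * u)) ^ 3
      - 27 * 10 ^ 2 * (-(u * (1 + u))) ^ 2 > 0) ∧
    ∃ x₁ x₂ x₃ : ℝ, x₁ ≠ x₂ ∧ x₁ ≠ x₃ ∧ x₂ ≠ x₃ ∧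
      (∀ x ∈ ({x₁, x₂, x₃} : Set ℝ),
        10 * x ^ 3 - 10 * (1 + u) * x ^ 2 + 2 * ((1 + u) ^ 2 + 2 * u) * x - u * (1 + u) = 0) := by
  refine ⟨by linear_combination 20 * disc_sextic_pos u, ?_⟩
  obtain ⟨x₁, x₂, x₃, h₁₂, h₂₃, hx₁, hx₂, hx₃⟩ := exists_three_roots_pStar hu1
  refine ⟨x₁, x₂, x₃, h₁₂.ne, (h₁₂.trans h₂₃).ne, h₂₃.ne, ?_⟩
  rintro x (rfl | rfl | rfl)
  exacts [hx₁, hx₂, hx₃]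

/-- For every `u ∈ (1, 2]`, the cubic
`p*(x) = 10x³ − 10(1+u)x² + 2((1+u)² + 2u)x − u(1+u)` has positive discriminant,
hence three distinct real roots. -/
theorem stmt_11 (u : ℝ) (hu1 : 1 < u) (hu2 : u ≤ 2) :
    (18 * 10 * (-(10 * (1 + u))) * (2 * ((1 + u) ^ 2 + 2 * u)) * (-(u * (1 + u)))
      - 4 * (-(10 * (1 + u))) ^ 3 * (-(u * (1 + u)))
      + (-(10 * (1 + u))) ^ 2 * (2 * ((1 + u) ^ 2 + 2 * u)) ^ 2
      - 4 * 10 * (2 * ((1 + u) ^ 2 + 2 * u)) ^ 3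
      - 27 * 10 ^ 2 * (-(u * (1 + u))) ^ 2 > 0) ∧
    ∃ x₁ x₂ x₃ : ℝ, x₁ ≠ x₂ ∧ x₁ ≠ x₃ ∧ x₂ ≠ x₃ ∧
      (∀ x ∈ ({x₁, x₂, x₃} : Set ℝ),
        10 * x ^ 3 - 10 * (1 + u) * x ^ 2 + 2 * ((1 + u) ^ 2 + 2 * u) * x - u * (1 + u) = 0) :=
  stmt_11_general u hu1
end

section
/- Let p*(x) = 5x³ − 10x² + 2(3 + ζ²)x − (1 + ζ²) with ζ > 0 real. The discriminant of p* is a positive multiple of −(32(ζ²)³ − 17(ζ²)² + 14ζ² − 1); in particular if ζ² > s, where s is the unique positive root of 32s³ − 17s² + 14s − 1 = 0, then p* has exactly one real root. -/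
/-!
The discriminant of `p*` is `5 · (−(32t³ − 17t² + 14t − 1))` with `t = ζ²`, a polynomial identity.
Since `t ↦ 32t³ − 17t² + 14t − 1` is strictly increasing and vanishes at `s`, it is positive for
`t > s`, so the discriminant is negative. A real cubic with two distinct real roots has a real
third root by Vieta, and then its discriminant is a square; so `p*` has at most one real root,
and it has one by the intermediate value theorem on `[0, 2]`.
-/

namespace Cubic

variable {K : Type*} [Field K] [LinearOrder K] [IsStrictOrderedRing K] {P : Cubic K} {x y : K}

theorem discr_nonneg_of_roots (ha : P.a ≠ 0) (hxy : x ≠ y)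
    (hx : P.a * x ^ 3 + P.b * x ^ 2 + P.c * x + P.d = 0)
    (hy : P.a * y ^ 3 + P.b * y ^ 2 + P.c * y + P.d = 0) : 0 ≤ P.discr := by
  obtain ⟨z, hb⟩ : ∃ z, P.b = -P.a * (x + y + z) :=
    ⟨-P.b / P.a - x - y, by field_simp; ring⟩
  have hxy' : P.a * (x ^ 2 + x * y + y ^ 2) + P.b * (x + y) + P.c = 0 := by
    refine (mul_eq_zero.1 ?_).resolve_left (sub_ne_zero.2 hxy)
    linear_combination hx - hy
  have hc : P.c = P.a * (x * y + x * z + y * z) := by linear_combination hxy' - (x + y) * hb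
  have hd : P.d = -P.a * (x * y * z) := by linear_combination hx - x ^ 2 * hb - x * hc
  have hsq : P.discr = (P.a * P.a * (x - y) * (x - z) * (y - z)) ^ 2 := by
    rw [discr, hb, hc, hd]; ring
  exact hsq ▸ sq_nonneg _

theorem eq_of_roots_of_discr_neg (ha : P.a ≠ 0) (hΔ : P.discr < 0)
    (hx : P.a * x ^ 3 + P.b * x ^ 2 + P.c * x + P.d = 0)
    (hy : P.a * y ^ 3 + P.b * y ^ 2 + P.c * y + P.d = 0) : x = y := by
  by_contra hxy
  exact hΔ.not_ge (discr_nonneg_of_roots ha hxy hx hy)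

end Cubic

theorem strictMono_pStar_discr_factor :
    StrictMono fun t : ℝ => 32 * t ^ 3 - 17 * t ^ 2 + 14 * t - 1 := by
  intro s t hst
  -- `t² + ts + s² ≥ 3(t + s)²/4`, and `24w² − 17w + 14` has negative discriminant
  have hq : 0 < 32 * (t ^ 2 + t * s + s ^ 2) - 17 * (t + s) + 14 := by
    nlinarith [sq_nonneg (t - s), sq_nonneg (48 * (t + s) - 17)]
  have hprod : 0 < (t - s) * (32 * (t ^ 2 + t * s + s ^ 2) - 17 * (t + s) + 14) :=
    mul_pos (sub_pos.2 hst) hq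
  show 32 * s ^ 3 - 17 * s ^ 2 + 14 * s - 1 < 32 * t ^ 3 - 17 * t ^ 2 + 14 * t - 1
  linear_combination hprod

theorem exists_root_pStar (t : ℝ) (ht : 0 ≤ t) :
    ∃ x : ℝ, 5 * x ^ 3 - 10 * x ^ 2 + 2 * (3 + t) * x - (1 + t) = 0 := by
  obtain ⟨x, -, hx⟩ := intermediate_value_Icc (zero_le_two : (0 : ℝ) ≤ 2)
    (f := fun x : ℝ => 5 * x ^ 3 - 10 * x ^ 2 + 2 * (3 + t) * x - (1 + t)) (by fun_prop)
    (show (0 : ℝ) ∈ Set.Icc _ _ by constructor <;> norm_num <;> linarith)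
  exact ⟨x, hx⟩

theorem stmt_14_general (ζ s : ℝ)
    (hs : 32 * s ^ 3 - 17 * s ^ 2 + 14 * s - 1 = 0) :
    (∃ k : ℝ, 0 < k ∧
      18 * 5 * (-10) * (2 * (3 + ζ ^ 2)) * (-(1 + ζ ^ 2))
        - 4 * (-10 : ℝ) ^ 3 * (-(1 + ζ ^ 2))
        + (-10 : ℝ) ^ 2 * (2 * (3 + ζ ^ 2)) ^ 2
        - 4 * 5 * (2 * (3 + ζ ^ 2)) ^ 3
        - 27 * 5 ^ 2 * (-(1 + ζ ^ 2)) ^ 2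
      = k * (-(32 * (ζ ^ 2) ^ 3 - 17 * (ζ ^ 2) ^ 2 + 14 * ζ ^ 2 - 1))) ∧
    (ζ ^ 2 > s →
      ∃! x : ℝ, 5 * x ^ 3 - 10 * x ^ 2 + 2 * (3 + ζ ^ 2) * x - (1 + ζ ^ 2) = 0) := by
  let P : Cubic ℝ := ⟨5, -10, 2 * (3 + ζ ^ 2), -(1 + ζ ^ 2)⟩
  have hdiscr : P.discr = 5 * -(32 * (ζ ^ 2) ^ 3 - 17 * (ζ ^ 2) ^ 2 + 14 * ζ ^ 2 - 1) := by
    simp only [Cubic.discr, P]; ring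
  refine ⟨⟨5, by norm_num, by rw [← hdiscr, Cubic.discr]; ring⟩, fun hsζ => ?_⟩
  have hfactor : 32 * s ^ 3 - 17 * s ^ 2 + 14 * s - 1
      < 32 * (ζ ^ 2) ^ 3 - 17 * (ζ ^ 2) ^ 2 + 14 * ζ ^ 2 - 1 :=
    strictMono_pStar_discr_factor hsζ
  have hΔ : P.discr < 0 := by rw [hdiscr]; linarith
  obtain ⟨x, hx⟩ := exists_root_pStar (ζ ^ 2) (sq_nonneg ζ)
  exact ⟨x, hx, fun y hy => Cubic.eq_of_roots_of_discr_neg (P := P) (by norm_num) hΔ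
    (by linear_combination hy) (by linear_combination hx)⟩

/-- For `p*(x) = 5x³ − 10x² + 2(3 + ζ²)x − (1 + ζ²)` with `ζ > 0`: the discriminant of `p*`
is a positive multiple of `−(32(ζ²)³ − 17(ζ²)² + 14ζ² − 1)`; in particular if `ζ² > s`,
where `s` is the unique positive root of `32s³ − 17s² + 14s − 1 = 0`, then `p*` has
exactly one real root. -/
theorem stmt_14 (ζ s : ℝ) (hζ : 0 < ζ)
    (hs0 : 0 < s) (hs : 32 * s ^ 3 - 17 * s ^ 2 + 14 * s - 1 = 0)
    (huniq : ∀ s' : ℝ, 0 < s' → 32 * s' ^ 3 - 17 * s' ^ 2 + 14 * s' - 1 = 0 → s' = s) :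
    (∃ k : ℝ, 0 < k ∧
      18 * 5 * (-10) * (2 * (3 + ζ ^ 2)) * (-(1 + ζ ^ 2))
        - 4 * (-10 : ℝ) ^ 3 * (-(1 + ζ ^ 2))
        + (-10 : ℝ) ^ 2 * (2 * (3 + ζ ^ 2)) ^ 2
        - 4 * 5 * (2 * (3 + ζ ^ 2)) ^ 3
        - 27 * 5 ^ 2 * (-(1 + ζ ^ 2)) ^ 2
      = k * (-(32 * (ζ ^ 2) ^ 3 - 17 * (ζ ^ 2) ^ 2 + 14 * ζ ^ 2 - 1))) ∧
    (ζ ^ 2 > s →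
      ∃! x : ℝ, 5 * x ^ 3 - 10 * x ^ 2 + 2 * (3 + ζ ^ 2) * x - (1 + ζ ^ 2) = 0) :=
  stmt_14_general ζ s hs
end

section
/- Let θ ∈ (−1, 1). Then (1/2)∫_{a₂}^{∞} dx / ((x−ξ)² sqrt((x−a₁)(x−a₂))) = (2/((θ²−1)(a₂−a₁)²))·(θ·arccos(θ)/sqrt(1−θ²) − 1), where ξ = (a₁+a₂)/2 − θ(a₂−a₁)/2 and a₁ < ξ < a₂. -/
/-!
Substituting `x = c + d t`, with `c` the midpoint and `d` the half-length of `[a₁, a₂]`, turns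
`(x - ξ)² √((x - a₁)(x - a₂))` into `d³ (t + θ)² √(t² - 1)`. On `(1, ∞)` the normalized integrand
has the elementary antiderivative
`(√(t² - 1) / (t + θ) - θ / √(1 - θ²) · arccos ((1 + θ t) / (t + θ))) / (1 - θ²)`:
the Möbius argument of `arccos` maps `(1, ∞)` into `(-1, 1)`, equals `1` at `t = 1` and tends
to `θ` at infinity, which gives the boundary values `0` and
`(1 - θ arccos θ / √(1 - θ²)) / (1 - θ²)`.
-/

open MeasureTheory Set Filter Topology Real

theorem integral_Ioi_comp_const_add_mul {E : Type*} [NormedAddCommGroup E] [NormedSpace ℝ E]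
    (f : ℝ → E) (a c : ℝ) {d : ℝ} (hd : 0 < d) :
    ∫ x in Ioi (c + d * a), f x = d • ∫ t in Ioi a, f (c + d * t) := by
  rw [integral_comp_mul_left_Ioi (fun x => f (c + x)) a hd, smul_inv_smul₀ hd.ne',
    ← (measurePreserving_add_left volume c).setIntegral_preimage_emb
      (measurableEmbedding_addLeft c), preimage_const_add_Ioi, add_sub_cancel_left]

noncomputable def invSqMulSqrtAntideriv (θ t : ℝ) : ℝ :=
  (√(t ^ 2 - 1) / (t + θ) - θ / √(1 - θ ^ 2) * arccos ((1 + θ * t) / (t + θ))) / (1 - θ ^ 2)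

theorem hasDerivAt_sqrt_sq_sub_one_div_add {θ t : ℝ} (hθ : -1 < θ) (ht : 1 < t) :
    HasDerivAt (fun t => √(t ^ 2 - 1) / (t + θ))
      ((1 + θ * t) / ((t + θ) ^ 2 * √(t ^ 2 - 1))) t := by
  have hsq : √(t ^ 2 - 1) ^ 2 = t ^ 2 - 1 := sq_sqrt (by nlinarith)
  have htθ : 0 < t + θ := by linarith
  have h := (((hasDerivAt_pow 2 t).sub_const 1).sqrt (by nlinarith)).div
    ((hasDerivAt_id t).add_const θ) htθ.ne'
  refine h.congr_deriv ?_
  simp only [id_eq, Nat.cast_ofNat, Nat.add_one_sub_one, pow_one]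
  field_simp
  rw [hsq]
  ring

theorem hasDerivAt_arccos_one_add_mul_div_add {θ t : ℝ} (hθ₁ : -1 < θ) (hθ₂ : θ < 1) (ht : 1 < t) :
    HasDerivAt (fun t => arccos ((1 + θ * t) / (t + θ)))
      (√(1 - θ ^ 2) / ((t + θ) * √(t ^ 2 - 1))) t := by
  have htθ : 0 < t + θ := by linarith
  have hk : 0 < √(1 - θ ^ 2) := sqrt_pos.2 (by nlinarith)
  have hs : 0 < √(t ^ 2 - 1) := sqrt_pos.2 (by nlinarith)
  have hlt : (1 + θ * t) / (t + θ) < 1 := by rw [div_lt_one htθ]; nlinarith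
  have hgt : -1 < (1 + θ * t) / (t + θ) := by rw [lt_div_iff₀ htθ]; nlinarith
  have hsqrt : √(1 - ((1 + θ * t) / (t + θ)) ^ 2) = √(1 - θ ^ 2) * √(t ^ 2 - 1) / (t + θ) := by
    have hsq : 1 - ((1 + θ * t) / (t + θ)) ^ 2 = (√(1 - θ ^ 2) * √(t ^ 2 - 1) / (t + θ)) ^ 2 := by
      rw [div_pow, div_pow, mul_pow, sq_sqrt (by nlinarith), sq_sqrt (by nlinarith)]
      field_simp
      ring
    rw [hsq, sqrt_sq (by positivity)]
  have h := (hasDerivAt_arccos hgt.ne' hlt.ne).comp t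
    ((((hasDerivAt_id t).const_mul θ).const_add 1).div ((hasDerivAt_id t).add_const θ) htθ.ne')
  refine h.congr_deriv ?_
  simp only [id_eq, mul_one, hsqrt]
  field_simp
  rw [sq_sqrt (by nlinarith)]
  ring

theorem tendsto_one_add_mul_div_add_atTop (θ : ℝ) :
    Tendsto (fun t => (1 + θ * t) / (t + θ)) atTop (𝓝 θ) := by
  have h : Tendsto (fun u : ℝ => (u + θ) / (1 + θ * u)) (𝓝 0) (𝓝 θ) := by
    simpa using (show ContinuousAt (fun u : ℝ => (u + θ) / (1 + θ * u)) 0 by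
      fun_prop (disch := simp)).tendsto
  refine (h.comp tendsto_inv_atTop_zero).congr' ?_
  filter_upwards [eventually_gt_atTop 0] with t ht
  simp only [Function.comp_apply]
  field_simp

theorem tendsto_sqrt_sq_sub_one_div_add_atTop (θ : ℝ) :
    Tendsto (fun t => √(t ^ 2 - 1) / (t + θ)) atTop (𝓝 1) := by
  have h : Tendsto (fun u : ℝ => √(1 - u ^ 2) / (1 + θ * u)) (𝓝 0) (𝓝 1) := by
    simpa using (show ContinuousAt (fun u : ℝ => √(1 - u ^ 2) / (1 + θ * u)) 0 by
      fun_prop (disch := simp)).tendsto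
  refine (h.comp tendsto_inv_atTop_zero).congr' ?_
  filter_upwards [eventually_gt_atTop 0] with t ht
  simp only [Function.comp_apply]
  rw [show 1 - t⁻¹ ^ 2 = (t ^ 2 - 1) / t ^ 2 by field_simp, sqrt_div' _ (sq_nonneg t),
    sqrt_sq ht.le]
  field_simp

theorem hasDerivAt_invSqMulSqrtAntideriv {θ t : ℝ} (hθ₁ : -1 < θ) (hθ₂ : θ < 1) (ht : 1 < t) :
    HasDerivAt (invSqMulSqrtAntideriv θ) (1 / ((t + θ) ^ 2 * √(t ^ 2 - 1))) t := by
  have hk : 0 < √(1 - θ ^ 2) := sqrt_pos.2 (by nlinarith)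
  have hs : 0 < √(t ^ 2 - 1) := sqrt_pos.2 (by nlinarith)
  have htθ : 0 < t + θ := by linarith
  have h1θ : 1 - θ ^ 2 ≠ 0 := by nlinarith
  refine (((hasDerivAt_sqrt_sq_sub_one_div_add hθ₁ ht).sub
    ((hasDerivAt_arccos_one_add_mul_div_add hθ₁ hθ₂ ht).const_mul _)).div_const _).congr_deriv ?_
  field_simp
  ring

theorem invSqMulSqrtAntideriv_one {θ : ℝ} (hθ : -1 < θ) : invSqMulSqrtAntideriv θ 1 = 0 := by
  have h : (1 + θ) / (1 + θ) = 1 := div_self (by linarith)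
  simp [invSqMulSqrtAntideriv, h]

theorem continuousAt_invSqMulSqrtAntideriv_one {θ : ℝ} (hθ : -1 < θ) :
    ContinuousAt (invSqMulSqrtAntideriv θ) 1 := by
  have : (1 : ℝ) + θ ≠ 0 := by linarith
  unfold invSqMulSqrtAntideriv
  fun_prop (disch := assumption)

theorem tendsto_invSqMulSqrtAntideriv_atTop (θ : ℝ) :
    Tendsto (invSqMulSqrtAntideriv θ) atTop
      (𝓝 ((1 - θ * arccos θ / √(1 - θ ^ 2)) / (1 - θ ^ 2))) := by
  have h := ((tendsto_sqrt_sq_sub_one_div_add_atTop θ).sub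
    (((continuous_arccos.tendsto θ).comp (tendsto_one_add_mul_div_add_atTop θ)).const_mul
      (θ / √(1 - θ ^ 2)))).div_const (1 - θ ^ 2)
  rwa [mul_div_right_comm]

theorem integral_Ioi_one_inv_sq_mul_sqrt {θ : ℝ} (hθ₁ : -1 < θ) (hθ₂ : θ < 1) :
    ∫ t in Ioi 1, 1 / ((t + θ) ^ 2 * √(t ^ 2 - 1)) =
      (1 - θ * arccos θ / √(1 - θ ^ 2)) / (1 - θ ^ 2) := by
  rw [integral_Ioi_of_hasDerivAt_of_nonneg
    (continuousAt_invSqMulSqrtAntideriv_one hθ₁).continuousWithinAt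
    (fun t ht => hasDerivAt_invSqMulSqrtAntideriv hθ₁ hθ₂ ht) (fun t _ => by positivity)
    (tendsto_invSqMulSqrtAntideriv_atTop θ), invSqMulSqrtAntideriv_one hθ₁, sub_zero]

/-- For `a₁ < a₂`, `θ ∈ (−1,1)` and `ξ = (a₁+a₂)/2 − θ(a₂−a₁)/2`:
`(1/2)∫_{a₂}^{∞} dx / ((x−ξ)² √((x−a₁)(x−a₂)))
 = (2/((θ²−1)(a₂−a₁)²))·(θ·arccos θ/√(1−θ²) − 1)`. -/
theorem stmt_17 (a₁ a₂ θ ξ : ℝ) (ha : a₁ < a₂) (hθ1 : -1 < θ) (hθ2 : θ < 1)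
    (hξ : ξ = (a₁ + a₂) / 2 - θ * (a₂ - a₁) / 2) :
    (1 / 2) * ∫ x in Ioi a₂, 1 / ((x - ξ) ^ 2 * Real.sqrt ((x - a₁) * (x - a₂))) =
      2 / ((θ ^ 2 - 1) * (a₂ - a₁) ^ 2) *
        (θ * Real.arccos θ / Real.sqrt (1 - θ ^ 2) - 1) := by
  obtain ⟨c, d, rfl, rfl⟩ : ∃ c d, a₁ = c - d ∧ a₂ = c + d :=
    ⟨(a₁ + a₂) / 2, (a₂ - a₁) / 2, by ring, by ring⟩
  have hd : 0 < d := by linarith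
  have hscale : ∀ t, 1 / ((c + d * t - ξ) ^ 2 * √((c + d * t - (c - d)) * (c + d * t - (c + d)))) =
      (d ^ 3)⁻¹ * (1 / ((t + θ) ^ 2 * √(t ^ 2 - 1))) := fun t => by
    rw [show c + d * t - ξ = d * (t + θ) by rw [hξ]; ring,
      show (c + d * t - (c - d)) * (c + d * t - (c + d)) = d ^ 2 * (t ^ 2 - 1) by ring,
      sqrt_mul (sq_nonneg d), sqrt_sq hd.le]
    simp only [one_div, mul_inv, mul_pow]
    ring
  nth_rw 1 [← mul_one d]
  rw [integral_Ioi_comp_const_add_mul _ _ _ hd, smul_eq_mul, funext hscale,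
    integral_const_mul, integral_Ioi_one_inv_sq_mul_sqrt hθ1 hθ2,
    show c + d - (c - d) = 2 * d by ring]
  have hθsq : θ ^ 2 - 1 ≠ 0 := by nlinarith
  have hθsq' : 1 - θ ^ 2 ≠ 0 := by nlinarith
  field_simp
  ring
end
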